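/- (Finite analogue of Ramanujan's Entry 4.) Let N be a positive integer and q ∈ ℂ with |q| < 1. Let a ∈ ℂ with a·q^k ≠ 1 for 1 ≤ k ≤ N. Then ∑_{n=1}^{N} [N choose n]_q · (−1)^{n−1} a^n q^{n(n+1)/2} (q;q)_n / ((1 − q^n)(aq;q)_n) = ∑_{n=1}^{N} a q^n / (1 − a q^n). -/

import Mathlib

open Finset

/-- Finite q-Pochhammer symbol `(a;q)_n = ∏_{k=0}^{n-1} (1 - a q^k)`. -/
noncomputable def qPoch (q a : ℂ) (n : ℕ) : ℂ :=
  ∏ k ∈ Finset.range n, (1 - a * q ^ k)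

/-- Infinite q-Pochhammer symbol `(a;q)_∞ = ∏_{k=0}^{∞} (1 - a q^k)`. -/
noncomputable def qPochInf (q a : ℂ) : ℂ :=
  ∏' k : ℕ, (1 - a * q ^ k)

/-- Gaussian (q-binomial) coefficient `[N choose n]_q`. -/
noncomputable def qBinom (q : ℂ) (N n : ℕ) : ℂ :=
  qPoch q q N / (qPoch q q n * qPoch q q (N - n))

/-!
Write `T_m(a)` for `ramanujanTerm q a m`, so that the `n`-th summand on the left is
`[N, n] · a q^n · T_{n-1}(a)`. The q-Pascal rule `[N+1, n] = [N, n] + q^(N+1-n) [N, n-1]`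
shows that the left side grows from `N` to `N + 1` by `a q^(N+1) S_N(a)`, where
`S_N(a) = ∑_{m ≤ N} [N, m] T_m(a)`. The other q-Pascal rule together with the three-term
relation `T_{m+1}(a) + q^m T_m(a) = T_m(aq)` gives `S_{N+1}(a) = S_N(aq)`, hence
`S_N(a) = 1 / (1 - a q^(N+1))`, which is exactly the growth of the right side.
-/

section QPochhammer

variable (q : ℂ)

@[simp]
lemma qPoch_zero (x : ℂ) : qPoch q x 0 = 1 := prod_range_zero _

lemma qPoch_succ (x : ℂ) (n : ℕ) : qPoch q x (n + 1) = qPoch q x n * (1 - x * q ^ n) :=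
  prod_range_succ _ _

lemma qPoch_succ' (x : ℂ) (n : ℕ) : qPoch q x (n + 1) = (1 - x) * qPoch q (x * q) n := by
  simp only [qPoch, prod_range_succ', pow_zero, mul_one, mul_assoc, ← pow_succ']
  ring

lemma qPoch_self_succ (n : ℕ) : qPoch q q (n + 1) = qPoch q q n * (1 - q ^ (n + 1)) := by
  rw [qPoch_succ, pow_succ']

lemma qPoch_ne_zero_iff {x : ℂ} {n : ℕ} : qPoch q x n ≠ 0 ↔ ∀ k < n, x * q ^ k ≠ 1 := by
  simp only [qPoch, ne_eq, prod_eq_zero_iff, mem_range, not_exists, not_and]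
  exact forall₂_congr fun k _ => sub_ne_zero.trans ne_comm

lemma qPoch_ne_zero_of_le {x : ℂ} {m n : ℕ} (hmn : m ≤ n) (h : qPoch q x n ≠ 0) :
    qPoch q x m ≠ 0 :=
  ne_zero_of_dvd_ne_zero h (prod_dvd_prod_of_subset _ _ _ (range_subset_range.mpr hmn))

variable {q}

lemma one_sub_pow_ne_zero (hq : ¬IsOfFinOrder q) {n : ℕ} (hn : n ≠ 0) : 1 - q ^ n ≠ 0 :=
  sub_ne_zero.mpr fun h =>
    hq (isOfFinOrder_iff_pow_eq_one.mpr ⟨n, Nat.pos_of_ne_zero hn, h.symm⟩)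

lemma qPoch_self_ne_zero (hq : ¬IsOfFinOrder q) (n : ℕ) : qPoch q q n ≠ 0 :=
  (qPoch_ne_zero_iff q).mpr fun k _ h => one_sub_pow_ne_zero hq k.succ_ne_zero
    (by rw [pow_succ', h, sub_self])

end QPochhammer

section QBinomial

variable {q : ℂ}

lemma qBinom_zero_right {N : ℕ} (h : qPoch q q N ≠ 0) : qBinom q N 0 = 1 := by
  simp [qBinom, h]

lemma qBinom_self {N : ℕ} (h : qPoch q q N ≠ 0) : qBinom q N N = 1 := by
  simp [qBinom, h]

lemma qBinom_symm {N k : ℕ} (hk : k ≤ N) : qBinom q N (N - k) = qBinom q N k := by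
  rw [qBinom, qBinom, Nat.sub_sub_self hk, mul_comm]

-- `m < N` matters: by truncated subtraction, `qBinom q N (N + 1) = 1 / (1 - q ^ (N + 1)) ≠ 0`.
lemma qBinom_succ_succ (hq : ¬IsOfFinOrder q) {N m : ℕ} (hm : m < N) :
    qBinom q (N + 1) (m + 1) = qBinom q N m + q ^ (m + 1) * qBinom q N (m + 1) := by
  obtain ⟨j, rfl⟩ := Nat.exists_eq_add_of_lt hm
  have e₁ : m + j + 1 + 1 - (m + 1) = j + 1 := by omega
  have e₂ : m + j + 1 - m = j + 1 := by omega
  have e₃ : m + j + 1 - (m + 1) = j := by omega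
  simp only [qBinom, e₁, e₂, e₃]
  rw [qPoch_self_succ q (m + j + 1), qPoch_self_succ q m, qPoch_self_succ q j]
  have := qPoch_self_ne_zero hq m
  have := qPoch_self_ne_zero hq j
  have := qPoch_self_ne_zero hq (m + j + 1)
  have := one_sub_pow_ne_zero hq m.succ_ne_zero
  have := one_sub_pow_ne_zero hq j.succ_ne_zero
  field_simp
  ring

lemma qBinom_succ_succ' (hq : ¬IsOfFinOrder q) {N m : ℕ} (hm : m < N) :
    qBinom q (N + 1) (m + 1) = qBinom q N (m + 1) + q ^ (N - m) * qBinom q N m := by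
  obtain ⟨k, hk⟩ : ∃ k, N - m = k + 1 := ⟨N - m - 1, by omega⟩
  rw [← qBinom_symm (by omega : m + 1 ≤ N + 1), ← qBinom_symm (by omega : m + 1 ≤ N),
    ← qBinom_symm hm.le, show N + 1 - (m + 1) = k + 1 by omega, show N - (m + 1) = k by omega, hk,
    qBinom_succ_succ hq (by omega : k < N), add_comm]

lemma sum_range_qBinom_succ (hq : ¬IsOfFinOrder q) (f : ℕ → ℂ) (N : ℕ) :
    ∑ m ∈ range (N + 2), qBinom q (N + 1) m * f m
      = ∑ m ∈ range (N + 1), qBinom q N m * (f (m + 1) + q ^ m * f m) := by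
  have hpascal : ∀ m ∈ range N, qBinom q (N + 1) (m + 1) * f (m + 1)
      = qBinom q N m * f (m + 1) + qBinom q N (m + 1) * (q ^ (m + 1) * f (m + 1)) := fun m hm => by
    rw [qBinom_succ_succ hq (mem_range.mp hm)]
    ring
  simp only [mul_add, sum_add_distrib]
  rw [sum_range_succ', sum_range_succ, sum_congr rfl hpascal, sum_add_distrib,
    sum_range_succ _ N, sum_range_succ' (fun m => qBinom q N m * (q ^ m * f m)),
    qBinom_self (qPoch_self_ne_zero hq _), qBinom_self (qPoch_self_ne_zero hq _),
    qBinom_zero_right (qPoch_self_ne_zero hq _), qBinom_zero_right (qPoch_self_ne_zero hq _)]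
  ring

lemma sum_range_qBinom_succ_succ (hq : ¬IsOfFinOrder q) (g : ℕ → ℂ) (N : ℕ) :
    ∑ m ∈ range (N + 1), qBinom q (N + 1) (m + 1) * g m
      = ∑ m ∈ range N, qBinom q N (m + 1) * g m
        + ∑ m ∈ range (N + 1), q ^ (N - m) * qBinom q N m * g m := by
  have hpascal : ∀ m ∈ range N, qBinom q (N + 1) (m + 1) * g m
      = qBinom q N (m + 1) * g m + q ^ (N - m) * qBinom q N m * g m := fun m hm => by
    rw [qBinom_succ_succ' hq (mem_range.mp hm)]
    ring
  rw [sum_range_succ, sum_congr rfl hpascal, sum_add_distrib, sum_range_succ _ N,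
    qBinom_self (qPoch_self_ne_zero hq _), qBinom_self (qPoch_self_ne_zero hq _), Nat.sub_self]
  ring

end QBinomial

lemma Nat.add_one_mul_add_two_div_two (m : ℕ) :
    (m + 1) * (m + 2) / 2 = m * (m + 1) / 2 + (m + 1) := by
  rw [show (m + 1) * (m + 2) = m * (m + 1) + 2 * (m + 1) by ring, Nat.add_mul_div_left _ _ two_pos]

lemma Finset.sum_Icc_one_eq_sum_range {M : Type*} [AddCommMonoid M] (f : ℕ → M) (N : ℕ) :
    ∑ n ∈ Icc 1 N, f n = ∑ m ∈ range N, f (m + 1) := by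
  rw [range_eq_Ico, sum_Ico_add' f 0 N 1, zero_add, Ico_add_one_right_eq_Icc]

noncomputable def ramanujanTerm (q a : ℂ) (m : ℕ) : ℂ :=
  (-1) ^ m * a ^ m * q ^ (m * (m + 1) / 2) * qPoch q q m / qPoch q (a * q) (m + 1)

section RamanujanTerm

variable {q a : ℂ}

lemma ramanujanTerm_succ_add {m : ℕ} (ha : qPoch q (a * q) (m + 2) ≠ 0) :
    ramanujanTerm q a (m + 1) + q ^ m * ramanujanTerm q a m = ramanujanTerm q (a * q) m := by
  have hP : qPoch q (a * q) (m + 2) = qPoch q (a * q) (m + 1) * (1 - a * q ^ (m + 2)) := by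
    rw [qPoch_succ]; ring
  have hR : qPoch q (a * q) (m + 2) = (1 - a * q) * qPoch q (a * q * q) (m + 1) := qPoch_succ' _ _ _
  obtain ⟨hP₁, hP₂⟩ := mul_ne_zero_iff.mp (hP ▸ ha)
  obtain ⟨hR₁, hR₂⟩ := mul_ne_zero_iff.mp (hR ▸ ha)
  have hRP : qPoch q (a * q * q) (m + 1)
      = qPoch q (a * q) (m + 1) * (1 - a * q ^ (m + 2)) / (1 - a * q) := by
    rw [← hP, hR, mul_div_cancel_left₀ _ hR₁]
  simp only [ramanujanTerm]
  rw [hRP, show m + 1 + 1 = m + 2 from rfl, hP, qPoch_self_succ, Nat.add_one_mul_add_two_div_two]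
  field_simp
  ring

lemma mul_ramanujanTerm (hq : ¬IsOfFinOrder q) (m : ℕ) :
    a * q ^ (m + 1) * ramanujanTerm q a m
      = (-1) ^ m * a ^ (m + 1) * q ^ ((m + 1) * (m + 1 + 1) / 2) * qPoch q q (m + 1)
        / ((1 - q ^ (m + 1)) * qPoch q (a * q) (m + 1)) := by
  have : 1 - q ^ (m + 1) ≠ 0 := one_sub_pow_ne_zero hq m.succ_ne_zero
  rw [ramanujanTerm, qPoch_self_succ, show m + 1 + 1 = m + 2 from rfl,
    Nat.add_one_mul_add_two_div_two, pow_add q (m * (m + 1) / 2)]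
  by_cases hP : qPoch q (a * q) (m + 1) = 0
  · simp [hP]
  · field_simp
    ring

lemma sum_range_qBinom_mul_ramanujanTerm (hq : ¬IsOfFinOrder q) (N : ℕ)
    (ha : qPoch q (a * q) (N + 1) ≠ 0) :
    ∑ m ∈ range (N + 1), qBinom q N m * ramanujanTerm q a m = 1 / (1 - a * q ^ (N + 1)) := by
  induction N generalizing a with
  | zero => simp [ramanujanTerm, qBinom, qPoch_succ]
  | succ N ih =>
    have hterm : ∀ m ∈ range (N + 1), ramanujanTerm q a (m + 1) + q ^ m * ramanujanTerm q a m
        = ramanujanTerm q (a * q) m := fun m hm =>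
      ramanujanTerm_succ_add (qPoch_ne_zero_of_le q (by simpa using hm) ha)
    have ha' : qPoch q (a * q * q) (N + 1) ≠ 0 := right_ne_zero_of_mul (qPoch_succ' q _ _ ▸ ha)
    rw [sum_range_qBinom_succ hq, sum_congr rfl fun m hm => by rw [hterm m hm], ih ha',
      mul_assoc, ← pow_succ']

lemma sum_range_qBinom_succ_mul_ramanujanTerm (hq : ¬IsOfFinOrder q) (N : ℕ)
    (ha : qPoch q (a * q) N ≠ 0) :
    ∑ m ∈ range N, qBinom q N (m + 1) * (a * q ^ (m + 1) * ramanujanTerm q a m)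
      = ∑ m ∈ range N, a * q ^ (m + 1) / (1 - a * q ^ (m + 1)) := by
  induction N with
  | zero => simp
  | succ N ih =>
    have hshift : ∀ m ∈ range (N + 1),
        q ^ (N - m) * qBinom q N m * (a * q ^ (m + 1) * ramanujanTerm q a m)
          = a * q ^ (N + 1) * (qBinom q N m * ramanujanTerm q a m) := fun m hm => by
      rw [show N + 1 = N - m + (m + 1) by simp at hm; omega, pow_add]
      ring
    rw [sum_range_qBinom_succ_succ hq, ih (qPoch_ne_zero_of_le q N.le_succ ha),
      sum_range_succ (fun m => a * q ^ (m + 1) / (1 - a * q ^ (m + 1))), sum_congr rfl hshift,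
      ← mul_sum, sum_range_qBinom_mul_ramanujanTerm hq N ha, mul_one_div]

end RamanujanTerm

theorem stmt_6_general (N : ℕ) (q a : ℂ) (hq : ‖q‖ < 1)
    (ha : ∀ k ∈ Finset.Icc 1 N, a * q ^ k ≠ 1) :
    ∑ n ∈ Finset.Icc 1 N, qBinom q N n *
        ((-1) ^ (n - 1) * a ^ n * q ^ (n * (n + 1) / 2) * qPoch q q n) /
        ((1 - q ^ n) * qPoch q (a * q) n)
      = ∑ n ∈ Finset.Icc 1 N, a * q ^ n / (1 - a * q ^ n) := by
  have hq' : ¬IsOfFinOrder q := fun h => hq.ne h.norm_eq_one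
  have ha' : qPoch q (a * q) N ≠ 0 := (qPoch_ne_zero_iff q).mpr fun k hk => by
    rw [mul_assoc, ← pow_succ']
    exact ha (k + 1) (mem_Icc.mpr ⟨Nat.le_add_left 1 k, hk⟩)
  rw [sum_Icc_one_eq_sum_range, sum_Icc_one_eq_sum_range,
    ← sum_range_qBinom_succ_mul_ramanujanTerm hq' N ha']
  refine sum_congr rfl fun m _ => ?_
  rw [Nat.add_sub_cancel, mul_div_assoc, mul_ramanujanTerm hq']

theorem stmt_6 (N : ℕ) (hN : 1 ≤ N) (q a : ℂ) (hq : ‖q‖ < 1)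
    (ha : ∀ k ∈ Finset.Icc 1 N, a * q ^ k ≠ 1) :
    ∑ n ∈ Finset.Icc 1 N, qBinom q N n *
        ((-1) ^ (n - 1) * a ^ n * q ^ (n * (n + 1) / 2) * qPoch q q n) /
        ((1 - q ^ n) * qPoch q (a * q) n)
      = ∑ n ∈ Finset.Icc 1 N, a * q ^ n / (1 - a * q ^ n) :=
  stmt_6_general N q a hq ha
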